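/- arXiv:1811.08808 — 2 statements merged into one kernel-verified Lean document; each statement's English description precedes it below -/
import Mathlib

section
/- Let V₁, V₂ : ℝ → ℝ be strictly decreasing functions, let z, w ∈ ℝ with V₁(z) = 0 and V₂(w) = 0, and let r₀ > 0. Define c* = max{ √2·V₁(z + r₀√2/2), −√2·V₁(z − r₀√2/2), √2·V₂(w + r₀√2/2), −√2·V₂(w − r₀√2/2) }, which is strictly negative. Then for every r ≥ r₀ and every (u, v) ∈ ℝ² with u² + v² = r², one has 2(V₁(z + u)·u + V₂(w + v)·v) ≤ c*·r. -/
/-- Sign lemma: `V(z+t)·t ≤ 0` for strictly decreasing `V` vanishing at `z`. -/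
lemma drift_sign (V : ℝ → ℝ) (hV : StrictAnti V) (z : ℝ) (hz : V z = 0) (t : ℝ) :
    V (z + t) * t ≤ 0 := by
  rcases lt_trichotomy t 0 with h | h | h
  · have hp : 0 < V (z + t) := by
      have := hV (show z + t < z by linarith); linarith
    nlinarith
  · simp [h]
  · have hp : V (z + t) < 0 := by
      have := hV (show z < z + t by linarith); linarith
    nlinarith

/-- Key one-coordinate bound. -/
lemma drift_key (V : ℝ → ℝ) (hV : StrictAnti V) (z : ℝ) (hz : V z = 0)
    (r₀ r t : ℝ) (hr₀ : 0 < r₀) (hr : r₀ ≤ r)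
    (ht : r * Real.sqrt 2 / 2 ≤ |t|) :
    2 * (V (z + t) * t)
      ≤ max (Real.sqrt 2 * V (z + r₀ * Real.sqrt 2 / 2))
            (-(Real.sqrt 2 * V (z - r₀ * Real.sqrt 2 / 2))) * r := by
  set s2 := Real.sqrt 2 with hs2def
  have hs2 : 0 < s2 := Real.sqrt_pos.mpr two_pos
  have hrpos : 0 < r := lt_of_lt_of_le hr₀ hr
  have hδ : 0 < r₀ * s2 / 2 := by positivity
  have hδr : r₀ * s2 / 2 ≤ r * s2 / 2 := by nlinarith
  rcases le_or_gt 0 t with htpos | htneg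
  · rw [abs_of_nonneg htpos] at ht
    have hV1 : V (z + t) ≤ V (z + r₀ * s2 / 2) := hV.antitone (by linarith)
    have hVδ : V (z + r₀ * s2 / 2) < 0 := by
      have := hV (show z < z + r₀ * s2 / 2 by linarith); linarith
    have h1 : V (z + t) * t ≤ V (z + r₀ * s2 / 2) * t :=
      mul_le_mul_of_nonneg_right hV1 htpos
    have h2 : V (z + r₀ * s2 / 2) * t ≤ V (z + r₀ * s2 / 2) * (r * s2 / 2) := by
      nlinarith
    have h3 : 2 * (V (z + r₀ * s2 / 2) * (r * s2 / 2)) = (s2 * V (z + r₀ * s2 / 2)) * r := by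
      ring
    have h4 : (s2 * V (z + r₀ * s2 / 2)) * r
        ≤ max (s2 * V (z + r₀ * s2 / 2)) (-(s2 * V (z - r₀ * s2 / 2))) * r :=
      mul_le_mul_of_nonneg_right (le_max_left _ _) hrpos.le
    linarith
  · rw [abs_of_neg htneg] at ht
    have hV1 : V (z - r₀ * s2 / 2) ≤ V (z + t) := hV.antitone (by linarith)
    have hVδ : 0 < V (z - r₀ * s2 / 2) := by
      have := hV (show z - r₀ * s2 / 2 < z by linarith); linarith
    have h1 : V (z + t) * t ≤ V (z - r₀ * s2 / 2) * t := by nlinarith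
    have h2 : V (z - r₀ * s2 / 2) * t ≤ V (z - r₀ * s2 / 2) * (-(r * s2 / 2)) := by
      nlinarith
    have h3 : 2 * (V (z - r₀ * s2 / 2) * (-(r * s2 / 2)))
        = (-(s2 * V (z - r₀ * s2 / 2))) * r := by ring
    have h4 : (-(s2 * V (z - r₀ * s2 / 2))) * r
        ≤ max (s2 * V (z + r₀ * s2 / 2)) (-(s2 * V (z - r₀ * s2 / 2))) * r :=
      mul_le_mul_of_nonneg_right (le_max_right _ _) hrpos.le
    linarith

/-- Negative linear bound on the radial drift functional: for strictly decreasing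
drifts `V₁, V₂` vanishing at `z` and `w`, with
`c* = max{√2·V₁(z + r₀√2/2), −√2·V₁(z − r₀√2/2), √2·V₂(w + r₀√2/2), −√2·V₂(w − r₀√2/2)}`,
one has `c* < 0` and `2(V₁(z+u)·u + V₂(w+v)·v) ≤ c*·r` whenever `u² + v² = r²`,
`r ≥ r₀`. -/
theorem radial_drift_bound
    (V₁ V₂ : ℝ → ℝ) (hV₁ : StrictAnti V₁) (hV₂ : StrictAnti V₂)
    (z w : ℝ) (hz : V₁ z = 0) (hw : V₂ w = 0)
    (r₀ : ℝ) (hr₀ : 0 < r₀) :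
    max (max (Real.sqrt 2 * V₁ (z + r₀ * Real.sqrt 2 / 2))
             (-(Real.sqrt 2 * V₁ (z - r₀ * Real.sqrt 2 / 2))))
        (max (Real.sqrt 2 * V₂ (w + r₀ * Real.sqrt 2 / 2))
             (-(Real.sqrt 2 * V₂ (w - r₀ * Real.sqrt 2 / 2)))) < 0
      ∧ ∀ r : ℝ, r₀ ≤ r → ∀ u v : ℝ, u ^ 2 + v ^ 2 = r ^ 2 →
        2 * (V₁ (z + u) * u + V₂ (w + v) * v)
          ≤ (max (max (Real.sqrt 2 * V₁ (z + r₀ * Real.sqrt 2 / 2))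
                      (-(Real.sqrt 2 * V₁ (z - r₀ * Real.sqrt 2 / 2))))
                 (max (Real.sqrt 2 * V₂ (w + r₀ * Real.sqrt 2 / 2))
                      (-(Real.sqrt 2 * V₂ (w - r₀ * Real.sqrt 2 / 2))))) * r := by
  have hs2 : 0 < Real.sqrt 2 := Real.sqrt_pos.mpr two_pos
  have hδ : 0 < r₀ * Real.sqrt 2 / 2 := by positivity
  have h1 : V₁ (z + r₀ * Real.sqrt 2 / 2) < 0 := by
    have := hV₁ (show z < z + r₀ * Real.sqrt 2 / 2 by linarith); linarith
  have h2 : 0 < V₁ (z - r₀ * Real.sqrt 2 / 2) := by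
    have := hV₁ (show z - r₀ * Real.sqrt 2 / 2 < z by linarith); linarith
  have h3 : V₂ (w + r₀ * Real.sqrt 2 / 2) < 0 := by
    have := hV₂ (show w < w + r₀ * Real.sqrt 2 / 2 by linarith); linarith
  have h4 : 0 < V₂ (w - r₀ * Real.sqrt 2 / 2) := by
    have := hV₂ (show w - r₀ * Real.sqrt 2 / 2 < w by linarith); linarith
  refine ⟨max_lt (max_lt (by nlinarith) (by nlinarith)) (max_lt (by nlinarith) (by nlinarith)), ?_⟩
  intro r hr u v huv
  have hrpos : 0 < r := lt_of_lt_of_le hr₀ hr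
  have hs2sq : Real.sqrt 2 * Real.sqrt 2 = 2 := Real.mul_self_sqrt two_pos.le
  have hcases : r * Real.sqrt 2 / 2 ≤ |u| ∨ r * Real.sqrt 2 / 2 ≤ |v| := by
    by_contra h
    push_neg at h
    have hu2 : u ^ 2 < (r * Real.sqrt 2 / 2) ^ 2 := by
      have := abs_nonneg u
      nlinarith [sq_abs u, h.1]
    have hv2 : v ^ 2 < (r * Real.sqrt 2 / 2) ^ 2 := by
      have := abs_nonneg v
      nlinarith [sq_abs v, h.2]
    nlinarith
  rcases hcases with hc | hc
  · have hkey := drift_key V₁ hV₁ z hz r₀ r u hr₀ hr hc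
    have hsign := drift_sign V₂ hV₂ w hw v
    have hmax : max (Real.sqrt 2 * V₁ (z + r₀ * Real.sqrt 2 / 2))
          (-(Real.sqrt 2 * V₁ (z - r₀ * Real.sqrt 2 / 2))) * r
        ≤ (max (max (Real.sqrt 2 * V₁ (z + r₀ * Real.sqrt 2 / 2))
                    (-(Real.sqrt 2 * V₁ (z - r₀ * Real.sqrt 2 / 2))))
               (max (Real.sqrt 2 * V₂ (w + r₀ * Real.sqrt 2 / 2))
                    (-(Real.sqrt 2 * V₂ (w - r₀ * Real.sqrt 2 / 2))))) * r :=
      mul_le_mul_of_nonneg_right (le_max_left _ _) hrpos.le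
    linarith
  · have hkey := drift_key V₂ hV₂ w hw r₀ r v hr₀ hr hc
    have hsign := drift_sign V₁ hV₁ z hz u
    have hmax : max (Real.sqrt 2 * V₂ (w + r₀ * Real.sqrt 2 / 2))
          (-(Real.sqrt 2 * V₂ (w - r₀ * Real.sqrt 2 / 2))) * r
        ≤ (max (max (Real.sqrt 2 * V₁ (z + r₀ * Real.sqrt 2 / 2))
                    (-(Real.sqrt 2 * V₁ (z - r₀ * Real.sqrt 2 / 2))))
               (max (Real.sqrt 2 * V₂ (w + r₀ * Real.sqrt 2 / 2))
                    (-(Real.sqrt 2 * V₂ (w - r₀ * Real.sqrt 2 / 2))))) * r :=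
      mul_le_mul_of_nonneg_right (le_max_right _ _) hrpos.le
    linarith
end

section
/- Let θ, κ, v > 0 with 2κθ ≥ v², and let g̃ : (0, ∞) → (0, 1] be continuous. Define, for x ∈ (0, θ], S(x) = −∫_x^θ exp( ∫_y^θ 2κ(θ − z)/(v² z g̃(z)²) dz ) dy. Then for every natural number n with n ≥ 1/θ, S(1/n) ≤ −(θ/e)·(ln n + ln θ). In particular, S(1/n) → −∞ as n → ∞. -/
open Set intervalIntegral

/-- Scale-function estimate for the CIR-type volatility: with `2κθ ≥ v²` and
`g̃ : (0,∞) → (0,1]` continuous, the scale function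
`S(x) = −∫_x^θ exp(∫_y^θ 2κ(θ−z)/(v² z g̃(z)²) dz) dy` satisfies
`S(1/n) ≤ −(θ/e)(ln n + ln θ)` for every `n ≥ 1/θ`; in particular `S(1/n) → −∞`. -/
theorem scale_function_estimate
    (θ κ v : ℝ) (hθ : 0 < θ) (hκ : 0 < κ) (hv : 0 < v)
    (hcond : v ^ 2 ≤ 2 * κ * θ)
    (gt : ℝ → ℝ) (hgtcont : ContinuousOn gt (Set.Ioi 0))
    (hgt : ∀ x : ℝ, 0 < x → 0 < gt x ∧ gt x ≤ 1)
    (S : ℝ → ℝ)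
    (hS : ∀ x ∈ Set.Ioc (0 : ℝ) θ,
      S x = -∫ y in x..θ,
        Real.exp (∫ z in y..θ, 2 * κ * (θ - z) / (v ^ 2 * z * (gt z) ^ 2))) :
    (∀ n : ℕ, 1 / θ ≤ (n : ℝ) →
        S (1 / (n : ℝ)) ≤ -(θ / Real.exp 1) * (Real.log n + Real.log θ))
      ∧ Filter.Tendsto (fun n : ℕ => S (1 / (n : ℝ))) Filter.atTop Filter.atBot := by
  have hv2 : (0 : ℝ) < v ^ 2 := by positivity
  set f : ℝ → ℝ := fun z => 2 * κ * (θ - z) / (v ^ 2 * z * (gt z) ^ 2) with hf_def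
  -- continuity of f on (0, ∞)
  have hf_cont : ContinuousOn f (Set.Ioi 0) := by
    apply ContinuousOn.div
    · exact (continuous_const.mul (continuous_const.sub continuous_id)).continuousOn
    · exact (continuousOn_const.mul continuousOn_id).mul (hgtcont.pow 2)
    · intro z hz
      have hz0 : (0:ℝ) < z := hz
      have := (hgt z hz0).1
      positivity
  -- main estimate
  have main : ∀ x ∈ Set.Ioc (0 : ℝ) θ,
      S x ≤ -(θ / Real.exp 1) * (Real.log θ - Real.log x) := by
    intro x hx
    obtain ⟨hx0, hxθ⟩ := hx
    -- pointwise lower bound on the inner integral for y ∈ [x, θ]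
    have inner_ge : ∀ y ∈ Set.Icc x θ,
        Real.log θ - Real.log y - 1 ≤ ∫ z in y..θ, f z := by
      intro y hy
      have hy0 : 0 < y := lt_of_lt_of_le hx0 hy.1
      have hyθ : y ≤ θ := hy.2
      have hsub : Set.uIcc y θ ⊆ Set.Ioi 0 := by
        rw [Set.uIcc_of_le hyθ]
        exact fun z hz => lt_of_lt_of_le hy0 hz.1
      have hint_f : IntervalIntegrable f MeasureTheory.volume y θ :=
        (hf_cont.mono hsub).intervalIntegrable
      have hcont1 : ContinuousOn (fun z : ℝ => 1 / z - 1 / θ) (Set.Ioi 0) :=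
        ContinuousOn.sub
          (continuousOn_const.div continuousOn_id fun z hz => ne_of_gt hz) continuousOn_const
      have hint_g : IntervalIntegrable (fun z => 1 / z - 1 / θ) MeasureTheory.volume y θ :=
        (hcont1.mono hsub).intervalIntegrable
      have hmono : ∫ z in y..θ, (1 / z - 1 / θ) ≤ ∫ z in y..θ, f z := by
        apply intervalIntegral.integral_mono_on hyθ hint_g hint_f
        intro z hz
        show 1 / z - 1 / θ ≤ 2 * κ * (θ - z) / (v ^ 2 * z * (gt z) ^ 2)
        have hz0 : 0 < z := lt_of_lt_of_le hy0 hz.1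
        have hzθ : z ≤ θ := hz.2
        have hg := hgt z hz0
        have hg2 : 0 < (gt z) ^ 2 := pow_pos hg.1 2
        have h1 : 1 / z - 1 / θ = (θ - z) * (1 / (θ * z)) := by
          field_simp
        rw [h1]
        have h2 : 2 * κ * (θ - z) / (v ^ 2 * z * (gt z) ^ 2)
            = (θ - z) * (2 * κ / (v ^ 2 * z * (gt z) ^ 2)) := by ring
        rw [h2]
        apply mul_le_mul_of_nonneg_left _ (by linarith)
        rw [div_le_div_iff₀ (by positivity) (by positivity)]
        have : v ^ 2 * z * (gt z) ^ 2 ≤ v ^ 2 * z := by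
          have h3 : (gt z) ^ 2 ≤ 1 := by nlinarith [hg.1, hg.2]
          exact mul_le_of_le_one_right (by positivity) h3
        nlinarith
      have h0 : (0 : ℝ) ∉ Set.uIcc y θ := by
        rw [Set.uIcc_of_le hyθ]
        intro h
        exact absurd h.1 (not_le.mpr hy0)
      have hone : IntervalIntegrable (fun z : ℝ => 1 / z) MeasureTheory.volume y θ := by
        apply ContinuousOn.intervalIntegrable
        apply ContinuousOn.mono _ hsub
        exact continuousOn_const.div continuousOn_id fun z hz => ne_of_gt hz
      have hcalc : ∫ z in y..θ, (1 / z - 1 / θ) =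
          (Real.log θ - Real.log y) - (θ - y) * (1 / θ) := by
        rw [integral_sub hone intervalIntegrable_const, integral_one_div h0,
          integral_const, Real.log_div (ne_of_gt hθ) (ne_of_gt hy0), smul_eq_mul]
      have : (θ - y) * (1 / θ) ≤ 1 := by
        rw [mul_one_div, div_le_one hθ]; linarith
      linarith
    -- exponentiate
    have exp_ge : ∀ y ∈ Set.Icc x θ,
        θ / Real.exp 1 * (1 / y) ≤ Real.exp (∫ z in y..θ, f z) := by
      intro y hy
      have hy0 : 0 < y := lt_of_lt_of_le hx0 hy.1
      have h1 : θ / Real.exp 1 * (1 / y) = Real.exp (Real.log θ - Real.log y - 1) := by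
        rw [Real.exp_sub, Real.exp_sub, Real.exp_log hθ, Real.exp_log hy0]
        field_simp
      rw [h1]
      exact Real.exp_le_exp.mpr (inner_ge y hy)
    -- integrability of the exponentiated inner integral
    have hsubx : Set.uIcc x θ ⊆ Set.Ioi 0 := by
      rw [Set.uIcc_of_le hxθ]
      exact fun z hz => lt_of_lt_of_le hx0 hz.1
    have hF_cont : ContinuousOn (fun y => ∫ z in y..θ, f z) (Set.uIcc x θ) := by
      exact intervalIntegral.continuousOn_primitive_interval_left
        ((hf_cont.mono hsubx).integrableOn_uIcc)
    have hint_exp : IntervalIntegrable (fun y => Real.exp (∫ z in y..θ, f z))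
        MeasureTheory.volume x θ :=
      (Real.continuous_exp.comp_continuousOn hF_cont).intervalIntegrable
    have hint_lhs : IntervalIntegrable (fun y => θ / Real.exp 1 * (1 / y))
        MeasureTheory.volume x θ := by
      apply ContinuousOn.intervalIntegrable
      exact ContinuousOn.mono (continuousOn_const.mul (continuousOn_const.div
        continuousOn_id (fun z hz => ne_of_gt hz))) hsubx
    have houter : ∫ y in x..θ, θ / Real.exp 1 * (1 / y)
        ≤ ∫ y in x..θ, Real.exp (∫ z in y..θ, f z) :=
      intervalIntegral.integral_mono_on hxθ hint_lhs hint_exp exp_ge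
    have h0x : (0 : ℝ) ∉ Set.uIcc x θ := by
      rw [Set.uIcc_of_le hxθ]
      intro h
      exact absurd h.1 (not_le.mpr hx0)
    have hcalc2 : ∫ y in x..θ, θ / Real.exp 1 * (1 / y)
        = θ / Real.exp 1 * (Real.log θ - Real.log x) := by
      rw [integral_const_mul, integral_one_div h0x,
        Real.log_div (ne_of_gt hθ) (ne_of_gt hx0)]
    rw [hS x ⟨hx0, hxθ⟩]
    rw [hcalc2] at houter
    linarith
  -- conclude
  have part1 : ∀ n : ℕ, 1 / θ ≤ (n : ℝ) →
      S (1 / (n : ℝ)) ≤ -(θ / Real.exp 1) * (Real.log n + Real.log θ) := by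
    intro n hn
    have hn0 : (0 : ℝ) < n := lt_of_lt_of_le (by positivity) hn
    have hmem : 1 / (n : ℝ) ∈ Set.Ioc (0 : ℝ) θ := by
      constructor
      · positivity
      · have h1 := (div_le_iff₀ hθ).mp hn
        rw [div_le_iff₀ hn0]
        nlinarith
    have := main _ hmem
    have hlog : Real.log (1 / (n : ℝ)) = -Real.log n := by
      rw [one_div, Real.log_inv]
    rw [hlog] at this
    calc S (1 / (n : ℝ)) ≤ -(θ / Real.exp 1) * (Real.log θ - -Real.log n) := this
      _ = -(θ / Real.exp 1) * (Real.log n + Real.log θ) := by ring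
  refine ⟨part1, ?_⟩
  have hev : (fun n : ℕ => S (1 / (n : ℝ))) ≤ᶠ[Filter.atTop]
      (fun n : ℕ => -(θ / Real.exp 1) * (Real.log n + Real.log θ)) := by
    filter_upwards [Filter.eventually_ge_atTop (Nat.ceil (1/θ))] with n hn
    apply part1
    exact le_trans (Nat.le_ceil _) (by exact_mod_cast hn)
  apply Filter.tendsto_atBot_mono' _ hev
  have h1 : Filter.Tendsto (fun n : ℕ => Real.log n + Real.log θ)
      Filter.atTop Filter.atTop := by
    apply Filter.tendsto_atTop_add_const_right
    exact Real.tendsto_log_atTop.comp tendsto_natCast_atTop_atTop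
  have h2 : (0 : ℝ) < θ / Real.exp 1 := by positivity
  have h3 := Filter.Tendsto.const_mul_atTop h2 h1
  have h4 := Filter.tendsto_neg_atBot_iff.mpr h3
  simpa [neg_mul] using h4
end
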